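/- arXiv:1706.04709 — 4 statements merged into one kernel-verified Lean document; each statement's English description precedes it below -/
import Mathlib

section
/- Let X be a finite set and μ: X × X → ℝ a function with μ(u,v) achieving its global minimum μ_min exactly when needed at u = v (i.e., μ(u,u) = μ_min for all u), and fix d > μ_min. Define M*(d) as the maximum cardinality of a subset C ⊆ X such that μ̃(u,v) := min(μ(u,v), μ(v,u)) ≥ d for all distinct u,v in C. Then for every probability distribution P on X, if X̂, X are i.i.d. with law P, Pr[μ̃(X̂, X) < d] ≥ 1/M*(d). -/
/-!
Codes of minimum distance `d` are the cliques of the graph joining distinct `u, v` with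
`μ̃(u, v) ≥ d`, so `M*(d)` is its clique number `ω`, and since `μ̃(u, u) < d` the probability
`Pr[μ̃(X̂, X) < d]` is `1 - pᵀ A p` for the adjacency matrix `A`. The bound is then the
Motzkin–Straus inequality `pᵀ A p ≤ 1 - 1/ω` on the standard simplex. If the support of `p` is
a clique, it follows from `pᵀ A p ≤ 1 - ∑ p x ^ 2` and Cauchy–Schwarz. Otherwise the support
contains two non-adjacent vertices `i, j`; along the direction `eᵢ - eⱼ` the form `pᵀ A p` is
affine, so moving all the mass of one of them onto the other does not decrease it and shrinks
the support.
-/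

open Finset Matrix

theorem Matrix.IsSymm.dotProduct_mulVec_add_smul {n R : Type*} [Fintype n] [CommRing R]
    {A : Matrix n n R} (hA : A.IsSymm) (p e : n → R) (t : R) :
    (p + t • e) ⬝ᵥ A *ᵥ (p + t • e) =
      p ⬝ᵥ A *ᵥ p + 2 * t * (e ⬝ᵥ A *ᵥ p) + t ^ 2 * (e ⬝ᵥ A *ᵥ e) := by
  have hcomm : p ⬝ᵥ A *ᵥ e = e ⬝ᵥ A *ᵥ p := by
    rw [dotProduct_mulVec, ← mulVec_transpose, hA.eq, dotProduct_comm]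
  simp only [add_dotProduct, dotProduct_add, mulVec_add, mulVec_smul, smul_dotProduct,
    dotProduct_smul, smul_eq_mul, hcomm]
  ring

theorem one_le_card_mul_sum_sq {ι : Type*} [Fintype ι] {p : ι → ℝ} {s : Finset ι}
    (hps : ∀ x ∉ s, p x = 0) (hp1 : ∑ x, p x = 1) : 1 ≤ #s * ∑ x, p x ^ 2 := by
  have hsum : ∑ x ∈ s, p x = 1 := by
    rw [← hp1]
    exact sum_subset (subset_univ s) fun x _ hx => hps x hx
  calc (1 : ℝ) = (∑ x ∈ s, p x) ^ 2 := by rw [hsum, one_pow]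
    _ ≤ #s * ∑ x ∈ s, p x ^ 2 := sq_sum_le_card_mul_sum_sq
    _ ≤ #s * ∑ x, p x ^ 2 := by
      gcongr
      exact subset_univ s

namespace SimpleGraph

variable {V : Type*} [Fintype V] (G : SimpleGraph V) [DecidableRel G.Adj]

theorem dotProduct_adjMatrix_mulVec_le_sq_sum_sub_sum_sq {p : V → ℝ} (hp : ∀ x, 0 ≤ p x) :
    p ⬝ᵥ G.adjMatrix ℝ *ᵥ p ≤ (∑ x, p x) ^ 2 - ∑ x, p x ^ 2 := by
  classical
  have hnbr : ∀ x, ∑ y ∈ G.neighborFinset x, p y ≤ ∑ y, p y - p x := fun x => by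
    rw [← sum_erase_eq_sub (mem_univ x)]
    refine sum_le_sum_of_subset_of_nonneg (fun y hy => ?_) fun y _ _ => hp y
    rw [mem_neighborFinset] at hy
    exact mem_erase.2 ⟨hy.ne', mem_univ y⟩
  calc p ⬝ᵥ G.adjMatrix ℝ *ᵥ p = ∑ x, p x * ∑ y ∈ G.neighborFinset x, p y := by
        simp only [dotProduct, adjMatrix_mulVec_apply]
    _ ≤ ∑ x, p x * (∑ y, p y - p x) :=
        sum_le_sum fun x _ => mul_le_mul_of_nonneg_left (hnbr x) (hp x)
    _ = (∑ x, p x) ^ 2 - ∑ x, p x ^ 2 := by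
        simp only [mul_sub, sum_sub_distrib, ← sum_mul, sq]

theorem dotProduct_adjMatrix_mulVec_le_of_card_le {p : V → ℝ} (hp : p ∈ stdSimplex ℝ V)
    {s : Finset V} (hps : ∀ x ∉ s, p x = 0) {ω : ℕ} (hω : #s ≤ ω) :
    p ⬝ᵥ G.adjMatrix ℝ *ᵥ p ≤ 1 - 1 / ω := by
  have hsq : 1 / (ω : ℝ) ≤ ∑ x, p x ^ 2 := by
    refine div_le_of_le_mul₀ ω.cast_nonneg (by positivity) ?_
    rw [mul_comm]
    exact (one_le_card_mul_sum_sq hps hp.2).trans (by gcongr)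
  have hQ := G.dotProduct_adjMatrix_mulVec_le_sq_sum_sub_sum_sq hp.1
  rw [hp.2, one_pow] at hQ
  linarith

theorem dotProduct_adjMatrix_mulVec_single_sub_single [DecidableEq V] {i j : V}
    (hadj : ¬ G.Adj i j) :
    (Pi.single i 1 - Pi.single j 1) ⬝ᵥ G.adjMatrix ℝ *ᵥ (Pi.single i 1 - Pi.single j 1) = 0 := by
  simp [mulVec_sub, sub_dotProduct, single_dotProduct, adjMatrix_apply, hadj,
    G.adj_comm j i]

theorem exists_transfer_le [DecidableEq V] {p : V → ℝ} (hp : p ∈ stdSimplex ℝ V) {s : Finset V}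
    (hps : ∀ x ∉ s, p x = 0) {i j : V} (hi : i ∈ s) (hij : i ≠ j) (hadj : ¬ G.Adj i j)
    (hgrad : 0 ≤ (Pi.single i 1 - Pi.single j 1) ⬝ᵥ G.adjMatrix ℝ *ᵥ p) :
    ∃ q ∈ stdSimplex ℝ V, (∀ x ∉ s.erase j, q x = 0) ∧
      p ⬝ᵥ G.adjMatrix ℝ *ᵥ p ≤ q ⬝ᵥ G.adjMatrix ℝ *ᵥ q := by
  set e : V → ℝ := Pi.single i 1 - Pi.single j 1
  have hq : ∀ x, (p + p j • e) x = p x + p j * e x := fun _ => rfl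
  refine ⟨p + p j • e, ⟨fun x => ?_, ?_⟩, fun x hx => ?_, ?_⟩
  · rw [hq]
    rcases eq_or_ne x j with rfl | hxj
    · simp [e, hij]
    · rcases eq_or_ne x i with rfl | hxi
      · simp [e, hxj, add_nonneg (hp.1 x) (hp.1 j)]
      · simp [e, hxi, hxj, hp.1 x]
  · simp [e, sum_add_distrib, ← mul_sum, hp.2]
  · rw [hq]
    rcases eq_or_ne x j with rfl | hxj
    · simp [e, hij]
    · have hxs : x ∉ s := fun h => hx (mem_erase.2 ⟨hxj, h⟩)
      have hxi : x ≠ i := by rintro rfl; exact hxs hi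
      simp [e, hxi, hxj, hps x hxs]
  · rw [G.isSymm_adjMatrix.dotProduct_mulVec_add_smul,
      G.dotProduct_adjMatrix_mulVec_single_sub_single hadj]
    nlinarith [hp.1 j]

theorem dotProduct_adjMatrix_mulVec_le_of_support_subset (s : Finset V) {p : V → ℝ}
    (hp : p ∈ stdSimplex ℝ V) (hps : ∀ x ∉ s, p x = 0) :
    p ⬝ᵥ G.adjMatrix ℝ *ᵥ p ≤ 1 - 1 / G.cliqueNum := by
  classical
  induction s using Finset.strongInduction generalizing p with
  | H s ih =>
  by_cases hs : G.IsClique (s : Set V)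
  · exact G.dotProduct_adjMatrix_mulVec_le_of_card_le hp hps hs.card_le_cliqueNum
  obtain ⟨i, hi, j, hj, hij, hadj⟩ : ∃ i ∈ s, ∃ j ∈ s, i ≠ j ∧ ¬ G.Adj i j := by
    simpa [isClique_iff, Set.Pairwise] using hs
  rcases le_total 0 ((Pi.single i 1 - Pi.single j 1) ⬝ᵥ G.adjMatrix ℝ *ᵥ p) with hgrad | hgrad
  · obtain ⟨q, hq, hqs, hle⟩ := G.exists_transfer_le hp hps hi hij hadj hgrad
    exact hle.trans (ih _ (erase_ssubset hj) hq hqs)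
  · obtain ⟨q, hq, hqs, hle⟩ := G.exists_transfer_le hp hps hj hij.symm (fun h => hadj h.symm)
      (by rwa [← neg_sub, neg_dotProduct, neg_nonneg])
    exact hle.trans (ih _ (erase_ssubset hi) hq hqs)

theorem dotProduct_adjMatrix_mulVec_le_one_sub_one_div_cliqueNum {p : V → ℝ}
    (hp : p ∈ stdSimplex ℝ V) : p ⬝ᵥ G.adjMatrix ℝ *ᵥ p ≤ 1 - 1 / G.cliqueNum :=
  G.dotProduct_adjMatrix_mulVec_le_of_support_subset univ hp fun x hx => absurd (mem_univ x) hx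

theorem one_div_cliqueNum_le_sum_not_adj {p : V → ℝ} (hp : p ∈ stdSimplex ℝ V) :
    1 / G.cliqueNum ≤ ∑ x, ∑ y, if G.Adj x y then 0 else p x * p y := by
  have hsplit : ∑ x, ∑ y, (if G.Adj x y then 0 else p x * p y) =
      (∑ x, p x) * (∑ y, p y) - p ⬝ᵥ G.adjMatrix ℝ *ᵥ p := by
    rw [sum_mul_sum]
    simp only [dotProduct, mulVec, adjMatrix_apply, mul_sum, ← sum_sub_distrib]
    refine sum_congr rfl fun x _ => sum_congr rfl fun y _ => ?_
    split_ifs <;> ring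
  rw [hsplit, hp.2, one_mul]
  linarith [G.dotProduct_adjMatrix_mulVec_le_one_sub_one_div_cliqueNum hp]

end SimpleGraph

def separationGraph {X : Type*} (μ : X → X → ℝ) (d : ℝ) : SimpleGraph X where
  Adj u v := u ≠ v ∧ d ≤ min (μ u v) (μ v u)
  symm := ⟨fun _ _ h => ⟨h.1.symm, min_comm (μ _ _) _ ▸ h.2⟩⟩
  loopless := ⟨fun _ h => h.1 rfl⟩

theorem isClique_separationGraph_iff {X : Type*} {μ : X → X → ℝ} {d : ℝ} {C : Finset X} :
    (separationGraph μ d).IsClique (C : Set X) ↔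
      ∀ u ∈ C, ∀ v ∈ C, u ≠ v → d ≤ min (μ u v) (μ v u) := by
  simp only [SimpleGraph.isClique_iff, Set.Pairwise, mem_coe, separationGraph]
  exact forall₂_congr fun u _ => forall₂_congr fun v _ =>
    forall_congr' fun huv => and_iff_right huv

theorem cliqueNum_separationGraph {X : Type*} (μ : X → X → ℝ) (d : ℝ) :
    (separationGraph μ d).cliqueNum = sSup {m : ℕ | ∃ C : Finset X, C.card = m ∧
      ∀ u ∈ C, ∀ v ∈ C, u ≠ v → d ≤ min (μ u v) (μ v u)} := by
  simp only [SimpleGraph.cliqueNum, SimpleGraph.isNClique_iff, isClique_separationGraph_iff,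
    and_comm]

theorem not_separationGraph_adj_iff {X : Type*} {μ : X → X → ℝ} {d : ℝ}
    (hdiag : ∀ u, μ u u < d) {u v : X} :
    ¬ (separationGraph μ d).Adj u v ↔ min (μ u v) (μ v u) < d := by
  rcases eq_or_ne u v with rfl | huv
  · simp [separationGraph, hdiag u]
  · simp only [separationGraph, ne_eq, huv, not_false_eq_true, true_and, not_le]

theorem stmt_2_general {X : Type*} [Fintype X]
    (μ : X → X → ℝ)
    (hμ : ∀ u : X, μ u u = ⨅ ab : X × X, μ ab.1 ab.2)
    (d : ℝ) (hd : (⨅ ab : X × X, μ ab.1 ab.2) < d)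
    (Mstar : ℕ)
    (hM : Mstar = sSup {m : ℕ | ∃ C : Finset X, C.card = m ∧
      ∀ u ∈ C, ∀ v ∈ C, u ≠ v → d ≤ min (μ u v) (μ v u)})
    (p : X → ℝ) (hp : ∀ x, 0 ≤ p x) (hp1 : ∑ x, p x = 1) :
    (1 : ℝ) / Mstar ≤
      ∑ x : X, ∑ y : X, (if min (μ x y) (μ y x) < d then p x * p y else 0) := by
  classical
  have hdiag : ∀ u, μ u u < d := fun u => hμ u ▸ hd
  rw [hM, ← cliqueNum_separationGraph]
  refine ((separationGraph μ d).one_div_cliqueNum_le_sum_not_adj ⟨hp, hp1⟩).trans_eq ?_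
  refine sum_congr rfl fun x _ => sum_congr rfl fun y _ => ?_
  rw [← ite_not]
  exact if_congr (not_separationGraph_adj_iff hdiag) rfl rfl

theorem stmt_2 {X : Type*} [Fintype X] [Nonempty X] [DecidableEq X]
    (μ : X → X → ℝ)
    (hμ : ∀ u : X, μ u u = ⨅ ab : X × X, μ ab.1 ab.2)
    (d : ℝ) (hd : (⨅ ab : X × X, μ ab.1 ab.2) < d)
    (Mstar : ℕ)
    (hM : Mstar = sSup {m : ℕ | ∃ C : Finset X, C.card = m ∧
      ∀ u ∈ C, ∀ v ∈ C, u ≠ v → d ≤ min (μ u v) (μ v u)})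
    (p : X → ℝ) (hp : ∀ x, 0 ≤ p x) (hp1 : ∑ x, p x = 1) :
    (1 : ℝ) / Mstar ≤
      ∑ x : X, ∑ y : X, (if min (μ x y) (μ y x) < d then p x * p y else 0) :=
  stmt_2_general μ hμ d hd Mstar hM p hp hp1
end

section
/- (Gilbert–Varshamov bound via distance spectrum) For a finite alphabet of size Q, Hamming distance μ, and 1 ≤ d ≤ n, the maximal size M*_n(d) of a length-n code with minimum pairwise Hamming distance at least d satisfies M*_n(d) ≥ Q^n / (\sum_{i=0}^{d-1} \binom{n}{i} (Q-1)^i). -/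
/-!
A code of minimum distance `d` that is maximal for inclusion leaves no word at distance `≥ d`
from all codewords, so the Hamming balls of radius `d - 1` around its codewords cover the whole
space. Each such ball has `∑_{k<d} (n choose k) (Q-1)^k` elements (choose the `k` coordinates that
differ, then a different letter in each), which bounds the size of the code from below.
-/

open Finset

section HammingBall

variable {ι α : Type*} [Fintype ι] [DecidableEq ι] [Fintype α] [DecidableEq α]

theorem card_filter_disagreeSet_eq (x : ι → α) (S : Finset ι) :
    #{y : ι → α | ({i | x i ≠ y i} : Finset ι) = S} = (Fintype.card α - 1) ^ #S := by
  have hfiber : ({y : ι → α | ({i | x i ≠ y i} : Finset ι) = S} : Finset _)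
      = Fintype.piFinset fun j => if j ∈ S then {x j}ᶜ else {x j} := by
    ext y
    simp only [mem_filter, mem_univ, true_and, Fintype.mem_piFinset, Finset.ext_iff]
    refine forall_congr' fun j => ?_
    by_cases hj : j ∈ S <;> simp [hj, eq_comm]
  simp only [hfiber, Fintype.card_piFinset, apply_ite card, card_compl, card_singleton]
  rw [prod_ite_mem, univ_inter, prod_const]

theorem card_hammingSphere (x : ι → α) (k : ℕ) :
    #{y : ι → α | hammingDist x y = k} = (Fintype.card ι).choose k * (Fintype.card α - 1) ^ k := by
  have hmaps : ∀ y ∈ ({y : ι → α | hammingDist x y = k} : Finset _),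
      ({i | x i ≠ y i} : Finset ι) ∈ powersetCard k univ := by
    intro y hy
    simpa [mem_powersetCard_univ, hammingDist] using hy
  rw [card_eq_sum_card_fiberwise hmaps]
  calc _ = ∑ S ∈ powersetCard k (univ : Finset ι), (Fintype.card α - 1) ^ k := by
        refine sum_congr rfl fun S hS => ?_
        rw [mem_powersetCard_univ] at hS
        rw [← hS, ← card_filter_disagreeSet_eq x S, filter_filter]
        congr 1
        ext y
        simp only [mem_filter, mem_univ, true_and, and_iff_right_iff_imp]
        rintro rfl
        rfl
    _ = _ := by rw [sum_const, card_powersetCard, card_univ, smul_eq_mul]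

theorem card_hammingBall (x : ι → α) (d : ℕ) :
    #{y : ι → α | hammingDist x y < d}
      = ∑ k ∈ range d, (Fintype.card ι).choose k * (Fintype.card α - 1) ^ k := by
  have hmaps : ∀ y ∈ ({y : ι → α | hammingDist x y < d} : Finset _), hammingDist x y ∈ range d :=
    fun y hy => mem_range.mpr (mem_filter.mp hy).2
  rw [card_eq_sum_card_fiberwise hmaps]
  refine sum_congr rfl fun k hk => ?_
  rw [← card_hammingSphere x k, filter_filter]
  congr 1
  ext y
  simp only [mem_filter, mem_univ, true_and, and_iff_right_iff_imp]
  rintro rfl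
  exact mem_range.mp hk

end HammingBall

theorem exists_hammingCode_covering {ι : Type*} {β : ι → Type*} [Fintype ι]
    [∀ i, Fintype (β i)] [∀ i, DecidableEq (β i)] {d : ℕ} (hd : 0 < d) :
    ∃ C : Finset (∀ i, β i), (∀ u ∈ C, ∀ v ∈ C, u ≠ v → d ≤ hammingDist u v) ∧
      ∀ y, ∃ c ∈ C, hammingDist c y < d := by
  classical
  let codes : Finset (Finset (∀ i, β i)) :=
    {C | ∀ u ∈ C, ∀ v ∈ C, u ≠ v → d ≤ hammingDist u v}
  obtain ⟨C, hC, hmax⟩ := exists_max_image codes card ⟨∅, by simp [codes]⟩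
  have hCcode := (mem_filter.mp hC).2
  refine ⟨C, hCcode, fun y => ?_⟩
  by_contra! hfar
  have hy : y ∉ C := fun hy => by simpa [hd.ne'] using hfar y hy
  have hinsert : insert y C ∈ codes := by
    refine mem_filter.mpr ⟨mem_univ _, ?_⟩
    simp only [mem_insert]
    rintro u (rfl | hu) v (rfl | hv) huv
    · exact absurd rfl huv
    · exact hammingDist_comm u v ▸ hfar v hv
    · exact hfar u hu
    · exact hCcode u hu v hv huv
  have := hmax _ hinsert
  rw [card_insert_of_notMem hy] at this
  omega

theorem card_pow_le_card_mul_sum_of_covering {ι α : Type*} [Fintype ι] [DecidableEq ι]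
    [Fintype α] [DecidableEq α] {C : Finset (ι → α)} {d : ℕ}
    (hC : ∀ y, ∃ c ∈ C, hammingDist c y < d) :
    Fintype.card α ^ Fintype.card ι
      ≤ #C * ∑ k ∈ range d, (Fintype.card ι).choose k * (Fintype.card α - 1) ^ k := by
  have hcover : (univ : Finset (ι → α)) ⊆ C.biUnion fun c => {y | hammingDist c y < d} := by
    intro y _
    obtain ⟨c, hc, hcy⟩ := hC y
    exact mem_biUnion.mpr ⟨c, hc, mem_filter.mpr ⟨mem_univ _, hcy⟩⟩
  calc Fintype.card α ^ Fintype.card ι = #(univ : Finset (ι → α)) := by simp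
    _ ≤ ∑ c ∈ C, #{y | hammingDist c y < d} := (card_le_card hcover).trans card_biUnion_le
    _ = _ := by simp only [card_hammingBall, sum_const, smul_eq_mul]

theorem stmt_5_general {α : Type*} [Fintype α] [DecidableEq α]
    (Q n d : ℕ) (hQ : Fintype.card α = Q) (hQ2 : 2 ≤ Q)
    (hd1 : 1 ≤ d) :
    ∃ C : Finset (Fin n → α),
      (∀ u ∈ C, ∀ v ∈ C, u ≠ v → d ≤ hammingDist u v) ∧
      (Q : ℝ) ^ n / (∑ i ∈ Finset.range d, (n.choose i : ℝ) * (Q - 1) ^ i)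
        ≤ (C.card : ℝ) := by
  obtain ⟨C, hCcode, hCcover⟩ := exists_hammingCode_covering (β := fun _ : Fin n => α) hd1
  refine ⟨C, hCcode, ?_⟩
  have hcount := card_pow_le_card_mul_sum_of_covering hCcover
  rw [Fintype.card_fin, hQ] at hcount
  have hvolume : (∑ i ∈ range d, (n.choose i : ℝ) * (Q - 1) ^ i)
      = ((∑ i ∈ range d, n.choose i * (Q - 1) ^ i : ℕ) : ℝ) := by
    push_cast [Nat.cast_sub (by omega : 1 ≤ Q)]
    rfl
  have hpos : 0 < ∑ i ∈ range d, n.choose i * (Q - 1) ^ i :=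
    sum_pos' (fun _ _ => Nat.zero_le _) ⟨0, mem_range.mpr hd1, by simp⟩
  rw [hvolume, div_le_iff₀ (by exact_mod_cast hpos)]
  exact_mod_cast hcount

theorem stmt_5 {α : Type*} [Fintype α] [DecidableEq α]
    (Q n d : ℕ) (hQ : Fintype.card α = Q) (hQ2 : 2 ≤ Q)
    (hn : 1 ≤ n) (hd1 : 1 ≤ d) :
    ∃ C : Finset (Fin n → α),
      (∀ u ∈ C, ∀ v ∈ C, u ≠ v → d ≤ hammingDist u v) ∧
      (Q : ℝ) ^ n / (∑ i ∈ Finset.range d, (n.choose i : ℝ) * (Q - 1) ^ i)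
        ≤ (C.card : ℝ) :=
  stmt_5_general Q n d hQ hQ2 hd1
end

section
/- For the torus distance μ(x̂², x²) = \sum_{i=1}^2 min(1 − |x̂_i − x_i|, |x̂_i − x_i|) on [0,1)², and d = 1/k with integer k ≥ 2, the maximal size of a code with pairwise distance at least 1/k is exactly 2k². -/
/-!
In the coordinates `(x + y, x - y)` the ℓ¹ distance on the torus `ℝ² / ℤ²` becomes a sup distance,
and the torus becomes `[0, 2) × [0, 1)` modulo the lattice `{(s, t) ∈ ℤ² | s ≡ t mod 2}`. Cutting this
fundamental domain into `2k²` half-open squares of side `1/k`, two points in the same square are at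
distance `< 1/k`, so a code has at most `2k²` points. The bound is attained by the checkerboard
`{(i, j) / 2k | 0 ≤ i, j < 2k, i ≡ j mod 2}`: distinct points differ by `(m, n) / 2k` with
`m ≡ n mod 2`, so either both coordinates contribute at least `1/2k` or one contributes `1/k`.
-/

open Finset

noncomputable section

/-- The distance on `ℝ / ℤ` between `x` and `y` whenever `|x - y| ≤ 1`. -/
def circDist (x y : ℝ) : ℝ := min (1 - |x - y|) |x - y|

def torusDist (u v : ℝ × ℝ) : ℝ := circDist u.1 v.1 + circDist u.2 v.2

lemma circDist_self (x : ℝ) : circDist x x = 0 := by simp [circDist]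

lemma circDist_intCast_div_intCast (i j : ℤ) {N : ℤ} (hN : 0 < N) :
    circDist (i / N) (j / N) = ((min (N - |i - j|) |i - j| : ℤ) : ℝ) / N := by
  have hN' : (0 : ℝ) < N := by exact_mod_cast hN
  rw [circDist, ← sub_div, abs_div, abs_of_pos hN', one_sub_div hN'.ne', min_div_div_right hN'.le]
  push_cast
  rfl

lemma circDist_le_abs_sub_sub_intCast (x y : ℝ) (r : ℤ) : circDist x y ≤ |x - y - r| := by
  rcases eq_or_ne r 0 with rfl | hr
  · rw [Int.cast_zero, sub_zero]
    exact min_le_right _ _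
  · have hr : (1 : ℝ) ≤ |(r : ℝ)| := by exact_mod_cast Int.one_le_abs hr
    have := abs_sub_abs_le_abs_sub (r : ℝ) (x - y)
    rw [abs_sub_comm (r : ℝ)] at this
    exact (min_le_left _ _).trans (by linarith)

def checkerPoint (k : ℕ) (t : ℕ × ℕ × ℕ) : ℝ × ℝ :=
  (((2 * t.1 + t.2.2 : ℤ) : ℝ) / (2 * k : ℤ), ((2 * t.2.1 + t.2.2 : ℤ) : ℝ) / (2 * k : ℤ))

def checkerIndices (k : ℕ) : Finset (ℕ × ℕ × ℕ) := range k ×ˢ range k ×ˢ range 2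

lemma checkerPoint_mem_Ico {k : ℕ} {t : ℕ × ℕ × ℕ} (ht : t ∈ checkerIndices k) :
    (checkerPoint k t).1 ∈ Set.Ico (0 : ℝ) 1 ∧ (checkerPoint k t).2 ∈ Set.Ico (0 : ℝ) 1 := by
  obtain ⟨a, b, e⟩ := t
  simp only [checkerIndices, mem_product, mem_range] at ht
  have hk : (0 : ℝ) < (2 * k : ℤ) := by push_cast; exact_mod_cast (by omega : 0 < 2 * k)
  simp only [checkerPoint, Set.mem_Ico, div_lt_one hk]
  refine ⟨⟨by positivity, ?_⟩, by positivity, ?_⟩ <;> exact_mod_cast (by omega)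

lemma one_div_le_torusDist_checkerPoint {k : ℕ} {t t' : ℕ × ℕ × ℕ} (ht : t ∈ checkerIndices k)
    (ht' : t' ∈ checkerIndices k) (hne : t ≠ t') :
    1 / (k : ℝ) ≤ torusDist (checkerPoint k t) (checkerPoint k t') := by
  obtain ⟨a, b, e⟩ := t
  obtain ⟨a', b', e'⟩ := t'
  simp only [checkerIndices, mem_product, mem_range] at ht ht'
  have hk : (0 : ℤ) < 2 * k := by omega
  have hsep : 2 ≤ min (2 * k - |(2 * a + e : ℤ) - (2 * a' + e')|) |(2 * a + e : ℤ) - (2 * a' + e')|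
      + min (2 * k - |(2 * b + e : ℤ) - (2 * b' + e')|) |(2 * b + e : ℤ) - (2 * b' + e')| := by
    simp only [ne_eq, Prod.mk.injEq] at hne
    simp only [abs_eq_max_neg]
    omega
  rw [torusDist, checkerPoint, checkerPoint, circDist_intCast_div_intCast _ _ hk,
    circDist_intCast_div_intCast _ _ hk, ← add_div, ← Int.cast_add]
  calc 1 / (k : ℝ) = ((2 : ℤ) : ℝ) / ((2 * k : ℤ) : ℝ) := by push_cast; field_simp
    _ ≤ _ := div_le_div_of_nonneg_right (Int.cast_le.mpr hsep) (by positivity)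

lemma exists_finset_card_eq_two_mul_sq {k : ℕ} (hk : 0 < k) :
    ∃ C : Finset (ℝ × ℝ), (∀ x ∈ C, x.1 ∈ Set.Ico (0 : ℝ) 1 ∧ x.2 ∈ Set.Ico (0 : ℝ) 1) ∧
      C.card = 2 * k ^ 2 ∧ ∀ u ∈ C, ∀ v ∈ C, u ≠ v → 1 / (k : ℝ) ≤ torusDist u v := by
  have hinj : Set.InjOn (checkerPoint k) (checkerIndices k) := by
    intro t ht t' ht' heq
    by_contra hne
    have := one_div_le_torusDist_checkerPoint ht ht' hne
    rw [heq, torusDist, circDist_self, circDist_self, add_zero] at this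
    exact (one_div_pos.mpr (Nat.cast_pos.mpr hk)).not_ge this
  refine ⟨(checkerIndices k).image (checkerPoint k), ?_, ?_, ?_⟩
  · simp only [mem_image, forall_exists_index, and_imp]
    rintro _ t ht rfl
    exact checkerPoint_mem_Ico ht
  · rw [card_image_of_injOn hinj, checkerIndices]
    simp only [card_product, card_range]
    ring
  · simp only [mem_image, forall_exists_index, and_imp]
    rintro _ t ht rfl _ t' ht' rfl hne
    exact one_div_le_torusDist_checkerPoint ht ht' (fun h => hne (h ▸ rfl))

lemma abs_add_add_abs_sub_le_max (x y : ℝ) : |x + y| + |x - y| ≤ 2 * max |x| |y| := by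
  have hx := abs_le.mp (le_max_left |x| |y|)
  have hy := abs_le.mp (le_max_right |x| |y|)
  rcases abs_cases (x + y) with ⟨h1, _⟩ | ⟨h1, _⟩ <;> rcases abs_cases (x - y) with ⟨h2, _⟩ | ⟨h2, _⟩ <;>
    linarith

/-- `(diagFst p, diagSnd p)` is the representative of `(p.1 + p.2, p.1 - p.2)` in `[0, 2) × [0, 1)`
modulo the lattice `{(s, t) ∈ ℤ² | s ≡ t mod 2}`. -/
def diagFst (p : ℝ × ℝ) : ℝ := 2 * Int.fract ((p.1 + p.2 - ⌊p.1 - p.2⌋) / 2)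

def diagSnd (p : ℝ × ℝ) : ℝ := Int.fract (p.1 - p.2)

lemma diagFst_nonneg (p : ℝ × ℝ) : 0 ≤ diagFst p :=
  mul_nonneg zero_le_two (Int.fract_nonneg _)

lemma diagFst_lt_two (p : ℝ × ℝ) : diagFst p < 2 := by
  have := Int.fract_lt_one ((p.1 + p.2 - ⌊p.1 - p.2⌋) / 2)
  rw [diagFst]
  linarith

lemma exists_sub_intCast_eq_diag (p : ℝ × ℝ) : ∃ a b : ℤ,
    p.1 - a = (diagFst p + diagSnd p) / 2 ∧ p.2 - b = (diagFst p - diagSnd p) / 2 := by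
  refine ⟨⌊p.1 - p.2⌋ + ⌊(p.1 + p.2 - ⌊p.1 - p.2⌋) / 2⌋, ⌊(p.1 + p.2 - ⌊p.1 - p.2⌋) / 2⌋,
    ?_, ?_⟩ <;>
  · rw [diagFst, diagSnd, Int.fract, Int.fract]
    push_cast
    ring

lemma torusDist_le_max_diag (p q : ℝ × ℝ) :
    torusDist p q ≤ max |diagFst p - diagFst q| |diagSnd p - diagSnd q| := by
  obtain ⟨a, b, ha, hb⟩ := exists_sub_intCast_eq_diag p
  obtain ⟨a', b', ha', hb'⟩ := exists_sub_intCast_eq_diag q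
  have h1 := circDist_le_abs_sub_sub_intCast p.1 q.1 (a - a')
  have h2 := circDist_le_abs_sub_sub_intCast p.2 q.2 (b - b')
  have e1 : p.1 - q.1 - ((a - a' : ℤ) : ℝ)
      = ((diagFst p - diagFst q) + (diagSnd p - diagSnd q)) / 2 := by
    push_cast; linarith
  have e2 : p.2 - q.2 - ((b - b' : ℤ) : ℝ)
      = ((diagFst p - diagFst q) - (diagSnd p - diagSnd q)) / 2 := by
    push_cast; linarith
  rw [e1, abs_div, abs_two] at h1
  rw [e2, abs_div, abs_two] at h2
  have := abs_add_add_abs_sub_le_max (diagFst p - diagFst q) (diagSnd p - diagSnd q)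
  rw [torusDist]
  linarith

lemma card_le_two_mul_sq_of_one_div_le_torusDist {k : ℕ} (hk : 0 < k) (C : Finset (ℝ × ℝ))
    (hC : ∀ u ∈ C, ∀ v ∈ C, u ≠ v → 1 / (k : ℝ) ≤ torusDist u v) : C.card ≤ 2 * k ^ 2 := by
  have hk0 : (0 : ℝ) < k := by exact_mod_cast hk
  let cell : ℝ × ℝ → ℤ × ℤ := fun p => (⌊k * diagFst p⌋, ⌊k * diagSnd p⌋)
  have hmaps : ∀ p ∈ C, cell p ∈ Ico 0 (2 * k : ℤ) ×ˢ Ico 0 (k : ℤ) := by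
    intro p _
    have := diagFst_nonneg p
    have := diagFst_lt_two p
    have := Int.fract_nonneg (p.1 - p.2)
    have := Int.fract_lt_one (p.1 - p.2)
    simp only [cell, diagSnd, mem_product, mem_Ico, Int.floor_nonneg, Int.floor_lt]
    push_cast
    refine ⟨⟨by positivity, by nlinarith⟩, by positivity, by nlinarith⟩
  have hinj : Set.InjOn cell C := by
    intro p hp q hq hpq
    by_contra hne
    simp only [cell, Prod.mk.injEq] at hpq
    have h1 := Int.abs_sub_lt_one_of_floor_eq_floor hpq.1
    have h2 := Int.abs_sub_lt_one_of_floor_eq_floor hpq.2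
    rw [← mul_sub, abs_mul, abs_of_pos hk0, ← lt_div_iff₀' hk0] at h1 h2
    have := (torusDist_le_max_diag p q).trans_lt (max_lt h1 h2)
    exact (hC p hp q hq hne).not_gt (by simpa using this)
  calc C.card ≤ (Ico 0 (2 * k : ℤ) ×ˢ Ico 0 (k : ℤ)).card := card_le_card_of_injOn cell hmaps hinj
    _ = 2 * k ^ 2 := by
      simp only [card_product, Int.card_Ico, sub_zero, Int.toNat_natCast]
      rw [show (2 * (k : ℤ)).toNat = 2 * k by omega]
      ring

end

theorem stmt_12 (k : ℕ) (hk : 2 ≤ k) :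
    IsGreatest
      {m : ℕ | ∃ C : Finset (ℝ × ℝ),
        (∀ x ∈ C, x.1 ∈ Set.Ico (0 : ℝ) 1 ∧ x.2 ∈ Set.Ico (0 : ℝ) 1) ∧
        C.card = m ∧
        ∀ u ∈ C, ∀ v ∈ C, u ≠ v →
          (1 : ℝ) / k ≤ min (1 - |u.1 - v.1|) |u.1 - v.1|
              + min (1 - |u.2 - v.2|) |u.2 - v.2|}
      (2 * k ^ 2) := by
  refine ⟨exists_finset_card_eq_two_mul_sq (by omega), ?_⟩
  rintro _ ⟨C, -, rfl, hC⟩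
  exact card_le_two_mul_sq_of_one_div_le_torusDist (by omega) C hC
end

section
/- For a Q-ary alphabet with Hamming distance and any 0 < δ < (Q−1)/Q, the maximal code rate satisfies R*_n(δ) = (1/n) log M*_n(nδ) ≥ D(δ ‖ (Q−1)/Q) for every n such that nδ is a positive integer. -/
/-! A code of maximal size `M` with minimum distance `d` cannot be enlarged, so the Hamming balls
of radius `d` around its codewords cover all `Q ^ n` words. The volume `V` of such a ball obeys the
Chernoff bound `V * t ^ d ≤ ∑ x, t ^ dist x c = (1 + (Q - 1) * t) ^ n` for `0 ≤ t ≤ 1`, whence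
`Q ^ n * t ^ d ≤ M * (1 + (Q - 1) * t) ^ n`. The optimal choice `t = δ / ((1 - δ) * (Q - 1))`
turns `log Q + δ * log t - log (1 + (Q - 1) * t)` into `D(δ ‖ (Q - 1) / Q)`. -/

open Finset

section HammingBall

variable {ι α : Type*} [Fintype ι] [DecidableEq ι] [Fintype α] [DecidableEq α]

theorem sum_pow_hammingDist {R : Type*} [CommRing R] (c : ι → α) (t : R) :
    ∑ x : ι → α, t ^ hammingDist x c = (1 + (Fintype.card α - 1) * t) ^ Fintype.card ι := by
  have hcoord (b : α) : ∑ a : α, (if a = b then 1 else t) = 1 + (Fintype.card α - 1) * t := by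
    have hsplit (a : α) : (if a = b then 1 else t) = t + if a = b then 1 - t else 0 := by
      split <;> ring
    simp only [hsplit, sum_add_distrib, sum_const, sum_ite_eq', mem_univ, if_true, card_univ,
      nsmul_eq_mul]
    ring
  calc ∑ x : ι → α, t ^ hammingDist x c
      = ∑ x : ι → α, ∏ i, (if x i = c i then 1 else t) := by
        refine sum_congr rfl fun x _ => ?_
        rw [prod_ite, prod_const_one, prod_const, one_mul]
        rfl
    _ = ∏ i, ∑ a : α, (if a = c i then 1 else t) := by
        rw [Fintype.prod_sum]
    _ = (1 + (Fintype.card α - 1) * t) ^ Fintype.card ι := by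
        simp only [hcoord, prod_const, card_univ]

theorem card_hammingBall_mul_pow_le (c : ι → α) (r : ℕ) {t : ℝ} (ht0 : 0 ≤ t) (ht1 : t ≤ 1) :
    #{x | hammingDist x c ≤ r} * t ^ r ≤ (1 + (Fintype.card α - 1) * t) ^ Fintype.card ι := by
  calc #{x | hammingDist x c ≤ r} * t ^ r
      = ∑ _x ∈ {x | hammingDist x c ≤ r}, t ^ r := by rw [sum_const, nsmul_eq_mul]
    _ ≤ ∑ x ∈ {x | hammingDist x c ≤ r}, t ^ hammingDist x c :=
        sum_le_sum fun x hx => pow_le_pow_of_le_one ht0 ht1 (mem_filter.mp hx).2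
    _ ≤ ∑ x : ι → α, t ^ hammingDist x c :=
        sum_le_sum_of_subset_of_nonneg (filter_subset _ _) fun _ _ _ => pow_nonneg ht0 _
    _ = _ := sum_pow_hammingDist c t

theorem card_pow_mul_pow_le_of_forall_exists_hammingDist_le {C : Finset (ι → α)} {r : ℕ}
    (hC : ∀ x, ∃ c ∈ C, hammingDist x c ≤ r) {t : ℝ} (ht0 : 0 ≤ t) (ht1 : t ≤ 1) :
    (Fintype.card α : ℝ) ^ Fintype.card ι * t ^ r
      ≤ #C * (1 + (Fintype.card α - 1) * t) ^ Fintype.card ι := by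
  have hcover : (univ : Finset (ι → α)) ⊆ C.biUnion fun c => {x | hammingDist x c ≤ r} :=
    fun x _ => by simpa using hC x
  have hcard : (Fintype.card α : ℝ) ^ Fintype.card ι
      ≤ ∑ c ∈ C, (#{x | hammingDist x c ≤ r} : ℝ) := by
    rw [← Nat.cast_pow, ← Fintype.card_fun, ← card_univ]
    exact_mod_cast (card_le_card hcover).trans card_biUnion_le
  calc (Fintype.card α : ℝ) ^ Fintype.card ι * t ^ r
      ≤ ∑ c ∈ C, (#{x | hammingDist x c ≤ r} : ℝ) * t ^ r := by
        rw [← sum_mul]; gcongr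
    _ ≤ ∑ _c ∈ C, (1 + (Fintype.card α - 1) * t) ^ Fintype.card ι :=
        sum_le_sum fun c _ => card_hammingBall_mul_pow_le c r ht0 ht1
    _ = _ := by rw [sum_const, nsmul_eq_mul]

variable (ι α) in
noncomputable def maxCodeCard (d : ℕ) : ℕ :=
  sSup {m : ℕ | ∃ C : Finset (ι → α), C.card = m ∧
    ∀ u ∈ C, ∀ v ∈ C, u ≠ v → d ≤ hammingDist u v}

theorem exists_card_eq_maxCodeCard_forall_exists_hammingDist_lt {d : ℕ} (hd : 0 < d) :
    ∃ C : Finset (ι → α), #C = maxCodeCard ι α d ∧ ∀ x, ∃ c ∈ C, hammingDist x c < d := by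
  have hbdd : BddAbove {m : ℕ | ∃ C : Finset (ι → α), C.card = m ∧
      ∀ u ∈ C, ∀ v ∈ C, u ≠ v → d ≤ hammingDist u v} :=
    ⟨Fintype.card (ι → α), by rintro _ ⟨C, rfl, -⟩; exact card_le_univ C⟩
  obtain ⟨C, hCcard, hCdist⟩ := Nat.sSup_mem (by exact ⟨0, ∅, rfl, by simp⟩) hbdd
  change #C = maxCodeCard ι α d at hCcard
  refine ⟨C, hCcard, fun x => ?_⟩
  by_contra! hfar
  have hx : x ∉ C := fun hx => by simpa using (hfar x hx).trans_lt' hd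
  -- a word far from every codeword could be added, contradicting maximality
  have hlarger : maxCodeCard ι α d + 1 ≤ maxCodeCard ι α d := by
    refine le_csSup hbdd ⟨insert x C, by rw [card_insert_of_notMem hx, hCcard], ?_⟩
    simp only [mem_insert]
    rintro u (rfl | hu) v (rfl | hv) huv
    · exact absurd rfl huv
    · exact hfar v hv
    · exact hammingDist_comm u v ▸ hfar u hu
    · exact hCdist u hu v hv huv
  omega

theorem card_pow_mul_pow_le_maxCodeCard {d : ℕ} (hd : 0 < d) {t : ℝ} (ht0 : 0 ≤ t)
    (ht1 : t ≤ 1) :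
    (Fintype.card α : ℝ) ^ Fintype.card ι * t ^ d
      ≤ maxCodeCard ι α d * (1 + (Fintype.card α - 1) * t) ^ Fintype.card ι := by
  obtain ⟨C, hCcard, hcover⟩ := exists_card_eq_maxCodeCard_forall_exists_hammingDist_lt
    (ι := ι) (α := α) hd
  rw [← hCcard]
  refine card_pow_mul_pow_le_of_forall_exists_hammingDist_le (fun x => ?_) ht0 ht1
  obtain ⟨c, hc, hxc⟩ := hcover x
  exact ⟨c, hc, hxc.le⟩

end HammingBall

theorem binaryKL_eq_log_sub_log_at_chernoff_point {Q δ : ℝ} (hQ : 1 < Q) (hδ0 : 0 < δ)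
    (hδ1 : δ < 1) {t : ℝ} (ht : t = δ / ((1 - δ) * (Q - 1))) :
    δ * Real.log (δ / ((Q - 1) / Q)) + (1 - δ) * Real.log ((1 - δ) / (1 / Q))
      = Real.log Q + δ * Real.log t - Real.log (1 + (Q - 1) * t) := by
  have h1δ : 1 - δ ≠ 0 := by linarith
  have hQ1 : Q - 1 ≠ 0 := by linarith
  have hB : 1 + (Q - 1) * t = (1 - δ)⁻¹ := by
    rw [ht]
    field_simp
    ring
  have hQ0 : Q ≠ 0 := by linarith
  rw [hB, ht, Real.log_inv, Real.log_div hδ0.ne' (div_ne_zero hQ1 hQ0),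
    Real.log_div hδ0.ne' (mul_ne_zero h1δ hQ1), Real.log_mul h1δ hQ1, Real.log_div hQ1 hQ0,
    Real.log_div h1δ (one_div_ne_zero hQ0), one_div, Real.log_inv]
  ring

theorem stmt_17 {α : Type*} [Fintype α] [DecidableEq α]
    (Q : ℕ) (hQ : Fintype.card α = Q) (hQ2 : 2 ≤ Q)
    (δ : ℝ) (hδ0 : 0 < δ) (hδ1 : δ < (Q - 1) / Q)
    (n d : ℕ) (hn : 0 < n) (hd : (d : ℝ) = n * δ) (hd0 : 0 < d) :
    δ * Real.log (δ / ((Q - 1) / Q))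
        + (1 - δ) * Real.log ((1 - δ) / (1 / Q))
      ≤ (1 / n : ℝ) * Real.log
          (sSup {m : ℕ | ∃ C : Finset (Fin n → α), C.card = m ∧
            ∀ u ∈ C, ∀ v ∈ C, u ≠ v → d ≤ hammingDist u v} : ℕ) := by
  change _ ≤ (1 / n : ℝ) * Real.log (maxCodeCard (Fin n) α d)
  have hQR : (2 : ℝ) ≤ Q := by exact_mod_cast hQ2
  have hδQ : δ * Q < Q - 1 := (lt_div_iff₀ (by linarith)).mp hδ1
  have hδ1' : δ < 1 := by nlinarith
  set t := δ / ((1 - δ) * (Q - 1)) with ht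
  rw [binaryKL_eq_log_sub_log_at_chernoff_point (by linarith) hδ0 hδ1' ht]
  have ht0 : 0 < t := div_pos hδ0 (mul_pos (by linarith) (by linarith))
  have ht1 : t ≤ 1 := (div_le_one (mul_pos (by linarith) (by linarith))).mpr (by nlinarith)
  have hbound := card_pow_mul_pow_le_maxCodeCard (ι := Fin n) (α := α) hd0 ht0.le ht1
  rw [Fintype.card_fin, hQ] at hbound
  have hB : 0 < 1 + ((Q : ℝ) - 1) * t := by nlinarith
  have hlhs : 0 < (Q : ℝ) ^ n * t ^ d := by positivity
  have hM : (0 : ℝ) < maxCodeCard (Fin n) α d :=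
    pos_of_mul_pos_left (hlhs.trans_le hbound) (by positivity)
  have hlog := Real.log_le_log hlhs hbound
  rw [Real.log_mul (by positivity) (by positivity), Real.log_mul hM.ne' (by positivity),
    Real.log_pow, Real.log_pow, Real.log_pow, hd] at hlog
  rw [one_div_mul_eq_div, le_div_iff₀ (by exact_mod_cast hn)]
  linarith
end
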